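/- arXiv:2502.03068 — 3 statements merged into one kernel-verified Lean document; each statement's English description precedes it below -/
import Mathlib

section
/- Let a ∈ (0, 1/2), δ > 0, μ ∈ (0,1), C_x > 0, and let u0, u1, x_tp, x0, u0δ, u1δ, xδ be real numbers. Assume: |u0δ − u0| ≤ δ, |u1δ − u1| ≤ δ, |xδ − x_tp| ≤ δ; either x_tp < 1/2 − a or x_tp > 1/2 + a; |x_tp − x0| ≤ C_x · μ·|ln μ|; δ ≤ a/2; μ·|ln μ| ≤ a/(2·C_x); and |1 − 2·x_tp| ≤ 1. Set fδ = (u0δ + u1δ)/(1 − 2·xδ) and f = (u0 + u1)/(1 − 2·x0). Then |fδ − f| ≤ C_a · (δ + μ·|ln μ|), where C_a = max( (|u0 + u1| + 1)/a², |u0 + u1|·C_x/a² ). -/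
/-- Noise-level estimate for the reconstruction formula
`f = (u0 + u1)/(1 - 2·x0)` in the time-dependent inverse coefficient problem. -/
theorem noise_level_estimate
    (a δ μ Cx u0 u1 xtp x0 u0δ u1δ xδ : ℝ)
    (ha : 0 < a) (ha' : a < 1 / 2)
    (hδ : 0 < δ) (hμ : 0 < μ) (hμ1 : μ < 1) (hCx : 0 < Cx)
    (hu0 : |u0δ - u0| ≤ δ) (hu1 : |u1δ - u1| ≤ δ) (hx : |xδ - xtp| ≤ δ)
    (hloc : xtp < 1 / 2 - a ∨ xtp > 1 / 2 + a)
    (htp : |xtp - x0| ≤ Cx * (μ * |Real.log μ|))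
    (hδa : δ ≤ a / 2)
    (hμa : μ * |Real.log μ| ≤ a / (2 * Cx))
    (hxb : |1 - 2 * xtp| ≤ 1) :
    |(u0δ + u1δ) / (1 - 2 * xδ) - (u0 + u1) / (1 - 2 * x0)| ≤
      max ((|u0 + u1| + 1) / a ^ 2) (|u0 + u1| * Cx / a ^ 2) *
        (δ + μ * |Real.log μ|) := by
  set L := |Real.log μ| with hLdef
  have hL : 0 ≤ L := abs_nonneg _
  have hμL : 0 ≤ μ * L := by positivity
  have hSnn : 0 ≤ |u0 + u1| := abs_nonneg _
  have hD : 2 * a ≤ |1 - 2 * xtp| := by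
    rcases hloc with h | h
    · rw [abs_of_pos (by linarith)]; linarith
    · rw [abs_of_neg (by linarith)]; linarith
  have hCxμL : Cx * (μ * L) ≤ a / 2 := by
    have := mul_le_mul_of_nonneg_left hμa hCx.le
    have h2 : Cx * (a / (2 * Cx)) = a / 2 := by field_simp
    linarith [h2 ▸ this]
  have hDδ : a ≤ |1 - 2 * xδ| := by
    have h1 : |1 - 2 * xtp| - |1 - 2 * xδ| ≤ |(1 - 2 * xtp) - (1 - 2 * xδ)| :=
      abs_sub_abs_le_abs_sub _ _
    have h2 : |(1 - 2 * xtp) - (1 - 2 * xδ)| = 2 * |xδ - xtp| := by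
      rw [show (1 - 2 * xtp) - (1 - 2 * xδ) = 2 * (xδ - xtp) by ring, abs_mul, abs_two]
    linarith
  have hD0 : a ≤ |1 - 2 * x0| := by
    have h1 : |1 - 2 * xtp| - |1 - 2 * x0| ≤ |(1 - 2 * xtp) - (1 - 2 * x0)| :=
      abs_sub_abs_le_abs_sub _ _
    have h2 : |(1 - 2 * xtp) - (1 - 2 * x0)| = 2 * |xtp - x0| := by
      rw [show (1 - 2 * xtp) - (1 - 2 * x0) = 2 * (x0 - xtp) by ring, abs_mul, abs_two,
        abs_sub_comm]
    linarith
  have hDne : (1 - 2 * xtp) ≠ 0 := by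
    intro h; rw [h, abs_zero] at hD; linarith
  have hDδne : (1 - 2 * xδ) ≠ 0 := by
    intro h; rw [h, abs_zero] at hDδ; linarith
  have hD0ne : (1 - 2 * x0) ≠ 0 := by
    intro h; rw [h, abs_zero] at hD0; linarith
  have key : (u0δ + u1δ) / (1 - 2 * xδ) - (u0 + u1) / (1 - 2 * x0)
      = ((u0δ + u1δ) - (u0 + u1)) / (1 - 2 * xδ)
        + (u0 + u1) * ((1 - 2 * xtp) - (1 - 2 * xδ)) / ((1 - 2 * xδ) * (1 - 2 * xtp))
        + (u0 + u1) * ((1 - 2 * x0) - (1 - 2 * xtp)) / ((1 - 2 * xtp) * (1 - 2 * x0)) := by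
    field_simp
    ring
  have b1 : |((u0δ + u1δ) - (u0 + u1)) / (1 - 2 * xδ)| ≤ 2 * δ / a := by
    rw [abs_div]
    apply div_le_div₀ (by linarith) _ ha hDδ
    have h0 : (u0δ + u1δ) - (u0 + u1) = (u0δ - u0) + (u1δ - u1) := by ring
    calc |(u0δ + u1δ) - (u0 + u1)| = |(u0δ - u0) + (u1δ - u1)| := by rw [h0]
      _ ≤ |u0δ - u0| + |u1δ - u1| := abs_add_le _ _
      _ ≤ 2 * δ := by linarith
  have b2 : |(u0 + u1) * ((1 - 2 * xtp) - (1 - 2 * xδ)) / ((1 - 2 * xδ) * (1 - 2 * xtp))|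
      ≤ |u0 + u1| * (2 * δ) / (a * (2 * a)) := by
    rw [abs_div, abs_mul, abs_mul]
    apply div_le_div₀ (by positivity) _ (by positivity)
      (mul_le_mul hDδ hD (by linarith) (abs_nonneg _))
    have h2 : |(1 - 2 * xtp) - (1 - 2 * xδ)| = 2 * |xδ - xtp| := by
      rw [show (1 - 2 * xtp) - (1 - 2 * xδ) = 2 * (xδ - xtp) by ring, abs_mul, abs_two]
    have : |(1 - 2 * xtp) - (1 - 2 * xδ)| ≤ 2 * δ := by rw [h2]; linarith
    exact mul_le_mul_of_nonneg_left this hSnn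
  have b3 : |(u0 + u1) * ((1 - 2 * x0) - (1 - 2 * xtp)) / ((1 - 2 * xtp) * (1 - 2 * x0))|
      ≤ |u0 + u1| * (2 * (Cx * (μ * L))) / (2 * a * a) := by
    rw [abs_div, abs_mul, abs_mul]
    apply div_le_div₀ (by positivity) _ (by positivity)
      (mul_le_mul hD hD0 ha.le (abs_nonneg _))
    have h2 : |(1 - 2 * x0) - (1 - 2 * xtp)| = 2 * |xtp - x0| := by
      rw [show (1 - 2 * x0) - (1 - 2 * xtp) = 2 * (xtp - x0) by ring, abs_mul, abs_two]
    have : |(1 - 2 * x0) - (1 - 2 * xtp)| ≤ 2 * (Cx * (μ * L)) := by rw [h2]; linarith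
    exact mul_le_mul_of_nonneg_left this hSnn
  have tri : |(u0δ + u1δ) / (1 - 2 * xδ) - (u0 + u1) / (1 - 2 * x0)|
      ≤ 2 * δ / a + |u0 + u1| * (2 * δ) / (a * (2 * a))
        + |u0 + u1| * (2 * (Cx * (μ * L))) / (2 * a * a) := by
    rw [key]
    calc |_ + _ + _| ≤ |((u0δ + u1δ) - (u0 + u1)) / (1 - 2 * xδ)
          + (u0 + u1) * ((1 - 2 * xtp) - (1 - 2 * xδ)) / ((1 - 2 * xδ) * (1 - 2 * xtp))|
          + |(u0 + u1) * ((1 - 2 * x0) - (1 - 2 * xtp)) / ((1 - 2 * xtp) * (1 - 2 * x0))| :=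
        abs_add_le _ _
      _ ≤ _ := by
        have := abs_add_le (((u0δ + u1δ) - (u0 + u1)) / (1 - 2 * xδ))
          ((u0 + u1) * ((1 - 2 * xtp) - (1 - 2 * xδ)) / ((1 - 2 * xδ) * (1 - 2 * xtp)))
        linarith
  set M := max ((|u0 + u1| + 1) / a ^ 2) (|u0 + u1| * Cx / a ^ 2) with hMdef
  have hM1 : (|u0 + u1| + 1) / a ^ 2 ≤ M := le_max_left _ _
  have hM2 : |u0 + u1| * Cx / a ^ 2 ≤ M := le_max_right _ _
  have e2 : |u0 + u1| * (2 * δ) / (a * (2 * a)) = |u0 + u1| * δ / a ^ 2 := by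
    field_simp
  have e3 : |u0 + u1| * (2 * (Cx * (μ * L))) / (2 * a * a)
      = (|u0 + u1| * Cx / a ^ 2) * (μ * L) := by
    field_simp
  have e1 : 2 * δ / a ≤ δ / a ^ 2 := by
    rw [div_le_div_iff₀ ha (by positivity)]
    nlinarith [mul_pos hδ ha, mul_pos (mul_pos hδ ha) ha]
  have hfin : δ / a ^ 2 + |u0 + u1| * δ / a ^ 2 ≤ M * δ := by
    have : ((|u0 + u1| + 1) / a ^ 2) * δ ≤ M * δ :=
      mul_le_mul_of_nonneg_right hM1 hδ.le
    calc δ / a ^ 2 + |u0 + u1| * δ / a ^ 2 = ((|u0 + u1| + 1) / a ^ 2) * δ := by ring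
      _ ≤ M * δ := this
  have hfin2 : (|u0 + u1| * Cx / a ^ 2) * (μ * L) ≤ M * (μ * L) :=
    mul_le_mul_of_nonneg_right hM2 hμL
  have := tri
  rw [e2, e3] at this
  calc |(u0δ + u1δ) / (1 - 2 * xδ) - (u0 + u1) / (1 - 2 * x0)|
      ≤ 2 * δ / a + |u0 + u1| * δ / a ^ 2 + (|u0 + u1| * Cx / a ^ 2) * (μ * L) := this
    _ ≤ M * δ + M * (μ * L) := by linarith
    _ = M * (δ + μ * L) := by ring
end

section
/- Let p, r be real numbers with p < 0 < r and r + 3p < 0. Set K = (r − p)/(r + 3p) and define Q : ℝ → ℝ by Q(ξ) = −2·p·K/(K − exp(p·ξ)). Then: (i) K − exp(p·ξ) ≠ 0 for all ξ; (ii) Q'(ξ) = −(1/2)·Q(ξ)·(Q(ξ) + 2·p) for all ξ ∈ ℝ; (iii) Q(0) = (r − p)/2; and (iv) Q(ξ) → 0 as ξ → −∞. -/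
open Filter

/-- Properties of the explicit zero-order left inner (transition layer)
function `Q0^l`. -/
theorem left_inner_function
    (p r K : ℝ) (Q : ℝ → ℝ)
    (hp : p < 0) (hr : 0 < r) (hpr : r + 3 * p < 0)
    (hK : K = (r - p) / (r + 3 * p))
    (hQ : ∀ ξ, Q ξ = -2 * p * K / (K - Real.exp (p * ξ))) :
    (∀ ξ : ℝ, K - Real.exp (p * ξ) ≠ 0) ∧
    (∀ ξ : ℝ, HasDerivAt Q (-(1 / 2) * Q ξ * (Q ξ + 2 * p)) ξ) ∧
    Q 0 = (r - p) / 2 ∧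
    Tendsto Q atBot (nhds 0) := by
  have hKneg : K < 0 := by
    rw [hK]
    exact div_neg_of_pos_of_neg (by linarith) hpr
  have hD : ∀ ξ : ℝ, K - Real.exp (p * ξ) ≠ 0 := by
    intro ξ
    have := Real.exp_pos (p * ξ)
    nlinarith
  refine ⟨hD, ?_, ?_, ?_⟩
  · intro ξ
    have hu : HasDerivAt (fun x : ℝ => p * x) p ξ := by
      simpa using (hasDerivAt_id ξ).const_mul p
    have he : HasDerivAt (fun x : ℝ => Real.exp (p * x))
        (Real.exp (p * ξ) * p) ξ := hu.exp
    have hd : HasDerivAt (fun x : ℝ => K - Real.exp (p * x))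
        (-(Real.exp (p * ξ) * p)) ξ := he.const_sub K
    have hf : HasDerivAt (fun x : ℝ => -2 * p * K / (K - Real.exp (p * x)))
        ((0 * (K - Real.exp (p * ξ)) - (-2 * p * K) * (-(Real.exp (p * ξ) * p))) /
          (K - Real.exp (p * ξ)) ^ 2) ξ :=
      (hasDerivAt_const ξ (-2 * p * K)).div hd (hD ξ)
    have hQf : Q = fun x : ℝ => -2 * p * K / (K - Real.exp (p * x)) := funext hQ
    rw [hQf]
    convert hf using 1
    simp only [hQ]
    field_simp [hD ξ]
    ring
  · have h1 : r + 3 * p ≠ 0 := ne_of_lt hpr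
    have hKm1 : K - 1 ≠ 0 := by
      have := hD 0; rwa [mul_zero, Real.exp_zero] at this
    have hKprod : K * (r + 3 * p) = r - p := by
      rw [hK]; exact div_mul_cancel₀ (r - p) h1
    rw [hQ 0, mul_zero, Real.exp_zero, div_eq_div_iff hKm1 two_ne_zero]
    linear_combination (-1 : ℝ) * hKprod
  · have hQf : Q = fun x : ℝ => -2 * p * K / (K - Real.exp (p * x)) := funext hQ
    rw [hQf]
    have hexp : Tendsto (fun x : ℝ => Real.exp (p * x)) atBot atTop := by
      apply Real.tendsto_exp_atTop.comp
      exact (tendsto_const_mul_atTop_iff_neg tendsto_id).mpr hp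
    have hden : Tendsto (fun x : ℝ => Real.exp (p * x) - K) atBot atTop := by
      simpa [sub_eq_add_neg] using tendsto_atTop_add_const_right atBot (-K) hexp
    have hmain : Tendsto (fun x : ℝ => 2 * p * K / (Real.exp (p * x) - K)) atBot (nhds 0) :=
      Tendsto.div_atTop tendsto_const_nhds hden
    have heq : ∀ x : ℝ, -2 * p * K / (K - Real.exp (p * x))
        = 2 * p * K / (Real.exp (p * x) - K) := by
      intro x
      have h := hD x
      have h2 : Real.exp (p * x) - K ≠ 0 := by
        intro hh; exact h (by linarith [sub_eq_zero.mp hh])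
      rw [div_eq_div_iff h h2]; ring
    exact Tendsto.congr (fun x => (heq x).symm) hmain
end

section
/- Let p, r be real numbers with p < 0 < r and p + 3r > 0. Set K = (p − r)/(p + 3r) and define Q : ℝ → ℝ by Q(ξ) = −2·r·K/(K − exp(r·ξ)). Then: (i) K − exp(r·ξ) ≠ 0 for all ξ; (ii) Q'(ξ) = −(1/2)·Q(ξ)·(Q(ξ) + 2·r) for all ξ ∈ ℝ; (iii) Q(0) = (p − r)/2; and (iv) Q(ξ) → 0 as ξ → +∞. -/
open Filter

/-- Properties of the explicit zero-order right inner (transition layer)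
function `Q0^r`. -/
theorem right_inner_function
    (p r K : ℝ) (Q : ℝ → ℝ)
    (hp : p < 0) (hr : 0 < r) (hpr : p + 3 * r > 0)
    (hK : K = (p - r) / (p + 3 * r))
    (hQ : ∀ ξ, Q ξ = -2 * r * K / (K - Real.exp (r * ξ))) :
    (∀ ξ : ℝ, K - Real.exp (r * ξ) ≠ 0) ∧
    (∀ ξ : ℝ, HasDerivAt Q (-(1 / 2) * Q ξ * (Q ξ + 2 * r)) ξ) ∧
    Q 0 = (p - r) / 2 ∧
    Tendsto Q atTop (nhds 0) := by
  have hKneg : K < 0 := by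
    rw [hK]
    apply div_neg_of_neg_of_pos <;> linarith
  have hne : ∀ ξ : ℝ, K - Real.exp (r * ξ) ≠ 0 := by
    intro ξ
    have := Real.exp_pos (r * ξ)
    nlinarith
  refine ⟨hne, ?_, ?_, ?_⟩
  · intro ξ
    have hd : HasDerivAt (fun x => -2 * r * K / (K - Real.exp (r * x)))
        ((0 * (K - Real.exp (r * ξ)) - (-2 * r * K) * (0 - Real.exp (r * ξ) * r))
          / (K - Real.exp (r * ξ)) ^ 2) ξ := by
      apply HasDerivAt.div
      · exact hasDerivAt_const ξ (-2 * r * K)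
      · have : HasDerivAt (fun x => Real.exp (r * x)) (Real.exp (r * ξ) * r) ξ := by
          have h1 : HasDerivAt (fun x : ℝ => r * x) r ξ := by
            simpa using (hasDerivAt_id ξ).const_mul r
          simpa using h1.exp
        exact (hasDerivAt_const ξ K).sub this
      · exact hne ξ
    have heq : (fun x => -2 * r * K / (K - Real.exp (r * x))) = Q := by
      funext x; rw [hQ x]
    rw [heq] at hd
    convert hd using 1
    rw [hQ ξ]
    have he := hne ξ
    field_simp [he]
    ring
  · rw [hQ 0]
    have h1 : K - Real.exp (r * 0) = -4 * r / (p + 3 * r) := by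
      rw [mul_zero, Real.exp_zero, hK]
      have h2 : p + 3 * r ≠ 0 := by linarith
      rw [div_sub_one h2]; congr 1; ring
    have h2 : p + 3 * r ≠ 0 := by linarith
    have h3 : r ≠ 0 := hr.ne'
    rw [h1, hK]
    rw [mul_div_assoc', div_div_div_cancel_right₀ h2]
    field_simp
    ring
  · have heq : Q = fun ξ => (2 * r * K) / (Real.exp (r * ξ) - K) := by
      funext ξ; rw [hQ ξ]
      rw [div_eq_div_iff (hne ξ) (sub_ne_zero.mpr (fun h => hne ξ (by linarith [sub_eq_zero.mpr h.symm]))) ]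
      ring
    rw [heq]
    apply Tendsto.div_atTop (tendsto_const_nhds)
    apply tendsto_atTop_add_const_right
    exact (Real.tendsto_exp_atTop).comp (tendsto_atTop_atTop_of_monotone
      (fun a b hab => by nlinarith) (fun b => ⟨b / r, by field_simp; exact le_refl b⟩))
end
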